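/- For every integer n ≥ 6 with n ≡ 0, 2, or 6 (mod 8), the Weierstrass group W_n is not pseudomodular: it is not the case that W_n is both a discrete subgroup of SL(2,ℝ) and has cusp set equal to ℚ ∪ {∞}. -/

import Mathlib

noncomputable section

open Matrix

abbrev SL2R := Matrix.SpecialLinearGroup (Fin 2) ℝ

/-- Generator `a` of the Weierstrass groups. -/
def Wa : SL2R := ⟨!![1, 2; -1, -1], by norm_num [Matrix.det_fin_two_of]⟩

/-- Generator `b = √n · [[1,1],[-(n+1)/n,-1]]` of the `n`-th Weierstrass group. -/
def Wb (n : ℕ) (hn : 0 < n) : SL2R :=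
  ⟨Real.sqrt n • !![1, 1; -((n : ℝ) + 1) / n, -1], by
    have h0 : (0:ℝ) ≤ n := Nat.cast_nonneg n
    have hne : (n : ℝ) ≠ 0 := Nat.cast_ne_zero.mpr hn.ne'
    have h : Real.sqrt n ^ 2 = n := Real.sq_sqrt h0
    rw [Matrix.det_smul]
    simp only [Matrix.det_fin_two_of, Fintype.card_fin]
    field_simp
    rw [h]; ring⟩

/-- Generator `c = (1/√n) · [[0,n],[-1,0]]` of the `n`-th Weierstrass group. -/
def Wc (n : ℕ) (hn : 0 < n) : SL2R :=
  ⟨(1 / Real.sqrt n) • !![0, (n : ℝ); -1, 0], by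
    have h0 : (0:ℝ) ≤ n := Nat.cast_nonneg n
    have hne : (n : ℝ) ≠ 0 := Nat.cast_ne_zero.mpr hn.ne'
    have h : Real.sqrt n ^ 2 = n := Real.sq_sqrt h0
    have hs : Real.sqrt n ≠ 0 := by
      intro hs; rw [hs] at h; simp at h; exact hne h.symm
    rw [Matrix.det_smul]
    simp only [Matrix.det_fin_two_of, Fintype.card_fin]
    field_simp
    rw [h]; ring⟩

/-- The `n`-th Weierstrass group. -/
def W (n : ℕ) (hn : 0 < n) : Subgroup SL2R :=
  Subgroup.closure {Wa, Wb n hn, Wc n hn}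

/-- `γ` fixes the boundary point `x ∈ ℝ`: `(x,1)` is an eigenvector of `γ`. -/
def FixesBoundary (γ : SL2R) (x : ℝ) : Prop :=
  ∃ t : ℝ, t ≠ 0 ∧ (γ : Matrix (Fin 2) (Fin 2) ℝ).mulVec ![x, 1] = t • ![x, 1]

/-- `γ` fixes the boundary point `∞`: `(1,0)` is an eigenvector of `γ`. -/
def FixesInfty (γ : SL2R) : Prop :=
  ∃ t : ℝ, t ≠ 0 ∧ (γ : Matrix (Fin 2) (Fin 2) ℝ).mulVec ![1, 0] = t • ![1, 0]

/-- `γ ∈ SL(2,ℝ)` is parabolic: `γ ≠ ±1` and `|tr γ| = 2`. -/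
def IsParabolic (γ : SL2R) : Prop :=
  γ ≠ 1 ∧ γ ≠ -1 ∧ |Matrix.trace (γ : Matrix (Fin 2) (Fin 2) ℝ)| = 2

/-- `γ ∈ SL(2,ℝ)` is hyperbolic: `|tr γ| > 2`. -/
def IsHyperbolic (γ : SL2R) : Prop :=
  2 < |Matrix.trace (γ : Matrix (Fin 2) (Fin 2) ℝ)|

/-- The topology on `SL(2,ℝ)` inherited from the space of real `2×2` matrices. -/
instance : TopologicalSpace SL2R :=
  TopologicalSpace.induced (fun g => (g : Matrix (Fin 2) (Fin 2) ℝ)) inferInstance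

/-! If a hyperbolic element `H` of a discrete group fixed the fixed point `x` of a parabolic
element `P`, say `H (x, 1) = t (x, 1)` with `|t| < 1`, then, writing `N_x` for the nilpotent
matrix with kernel and image spanned by `(x, 1)`, the conjugates
`H^k P² H^{-k} = 1 + l t^{2k} N_x` (`l ≠ 0`) would be elements `≠ 1` of the group accumulating
at `1`. In `W_n` the word `J T^k J T`, with `J = c a c` and the translation `T = a b c`, is
hyperbolic with a rational fixed point: `12m`, with eigenvalue `1/(4m)`, for `n = 8m`, `k = m`;
and `(2j+1)(3j+1)/j`, with eigenvalue `-1/(2j+1)²`, for `n = 4j+2`, `k = -j²`. So if every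
rational were a cusp of `W_n`, the group could not be discrete. -/

open Filter Topology

local notation "M2" => Matrix (Fin 2) (Fin 2) ℝ

def cuspNilpotent (x : ℝ) : M2 := vecMulVec ![x, 1] ![1, -x]

lemma cuspNilpotent_mul_self (x : ℝ) : cuspNilpotent x * cuspNilpotent x = 0 := by
  rw [cuspNilpotent, vecMulVec_mul_vecMulVec]
  simp [dotProduct]

lemma cuspNilpotent_one_zero (x : ℝ) : cuspNilpotent x 1 0 = 1 := by
  simp [cuspNilpotent]

lemma mulVec_eq_smul_iff {A : M2} {x t : ℝ} :
    A *ᵥ ![x, 1] = t • ![x, 1] ↔ A 0 0 * x + A 0 1 = t * x ∧ A 1 0 * x + A 1 1 = t := by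
  simp [funext_iff, Fin.forall_fin_two]

lemma sq_sub_trace_mul_add_one_of_mulVec {γ : SL2R} {x t : ℝ}
    (hγ : (γ : M2) *ᵥ ![x, 1] = t • ![x, 1]) : t ^ 2 - trace (γ : M2) * t + 1 = 0 := by
  obtain ⟨h0, h1⟩ := mulVec_eq_smul_iff.1 hγ
  have hdet := γ.2
  rw [det_fin_two] at hdet
  rw [trace_fin_two]
  linear_combination ((γ : M2) 0 0 - t) * h1 - (γ : M2) 1 0 * h0 - hdet

lemma vecMul_inv_of_mulVec {γ : SL2R} {x t : ℝ} (hγ : (γ : M2) *ᵥ ![x, 1] = t • ![x, 1]) :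
    ![1, -x] ᵥ* ((γ⁻¹ : SL2R) : M2) = t • ![1, -x] := by
  obtain ⟨h0, h1⟩ := mulVec_eq_smul_iff.1 hγ
  rw [Matrix.SpecialLinearGroup.coe_inv, adjugate_fin_two]
  ext i
  fin_cases i <;> simp [vecMul, dotProduct, Fin.sum_univ_two]
  · linear_combination h1
  · linear_combination -h0

lemma coe_conj_one_add_cuspNilpotent {γ Q : SL2R} {x t l : ℝ}
    (hγ : (γ : M2) *ᵥ ![x, 1] = t • ![x, 1]) (hQ : (Q : M2) = 1 + l • cuspNilpotent x) :
    ((γ * Q * γ⁻¹ : SL2R) : M2) = 1 + (l * t ^ 2) • cuspNilpotent x := by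
  have hinv : (γ : M2) * ((γ⁻¹ : SL2R) : M2) = 1 := by
    rw [← Matrix.SpecialLinearGroup.coe_mul, mul_inv_cancel, Matrix.SpecialLinearGroup.coe_one]
  rw [Matrix.SpecialLinearGroup.coe_mul, Matrix.SpecialLinearGroup.coe_mul, hQ, mul_add, mul_one,
    add_mul, hinv, mul_smul_comm, smul_mul_assoc, cuspNilpotent, mul_vecMulVec, vecMulVec_mul, hγ,
    vecMul_inv_of_mulVec hγ]
  simp only [smul_vecMulVec, vecMulVec_smul, smul_smul]
  ring_nf

lemma coe_eq_smul_one_add_of_isParabolic {P : SL2R} {x : ℝ} (hpar : IsParabolic P)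
    (hPx : FixesBoundary P x) :
    ∃ s : ℝ, s ^ 2 = 1 ∧ (P : M2) = s • 1 + (P : M2) 1 0 • cuspNilpotent x := by
  obtain ⟨t, -, hPt⟩ := hPx
  obtain ⟨s, hτ⟩ : ∃ s, trace (P : M2) = 2 * s := ⟨trace (P : M2) / 2, by ring⟩
  have hs : s ^ 2 = 1 := by
    have h := sq_abs (trace (P : M2))
    rw [hpar.2.2, hτ] at h
    linarith
  have hts : t = s := by
    have h := sq_sub_trace_mul_add_one_of_mulVec hPt
    rw [hτ] at h
    have : (t - s) ^ 2 = 0 := by linear_combination h + hs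
    linarith [pow_eq_zero_iff two_ne_zero |>.mp this]
  obtain ⟨h0, h1⟩ := mulVec_eq_smul_iff.1 hPt
  rw [trace_fin_two] at hτ
  refine ⟨s, hs, ?_⟩
  ext i j
  fin_cases i <;> fin_cases j <;> simp [cuspNilpotent]
  · linear_combination hτ - h1 - hts
  · linear_combination h0 - x * hτ + x * h1 + 2 * x * hts
  · linear_combination h1 + hts

lemma exists_coe_sq_eq_one_add_of_isParabolic {P : SL2R} {x : ℝ} (hpar : IsParabolic P)
    (hPx : FixesBoundary P x) :
    ∃ l : ℝ, l ≠ 0 ∧ ((P ^ 2 : SL2R) : M2) = 1 + l • cuspNilpotent x := by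
  obtain ⟨s, hs, hP⟩ := coe_eq_smul_one_add_of_isParabolic hpar hPx
  set c := (P : M2) 1 0
  have hc : c ≠ 0 := by
    intro hc
    rw [hc, zero_smul, add_zero] at hP
    rcases sq_eq_one_iff.mp hs with rfl | rfl
    · exact hpar.1 (Subtype.ext (by simp [hP]))
    · exact hpar.2.1 (Subtype.ext (by simp [hP]))
  have hs0 : s ≠ 0 := by
    rintro rfl
    norm_num at hs
  refine ⟨2 * s * c, by positivity, ?_⟩
  rw [Matrix.SpecialLinearGroup.coe_pow, sq, hP]
  simp only [add_mul, mul_add, smul_mul_assoc, mul_smul_comm, one_mul, mul_one,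
    cuspNilpotent_mul_self, smul_zero, smul_smul, add_zero]
  rw [smul_add, smul_smul, ← sq, hs, one_smul]
  module

lemma pow_mulVec_of_mulVec {γ : SL2R} {v : Fin 2 → ℝ} {t : ℝ}
    (hγ : (γ : M2) *ᵥ v = t • v) (k : ℕ) : ((γ ^ k : SL2R) : M2) *ᵥ v = t ^ k • v := by
  induction k with
  | zero => simp
  | succ k ih =>
    rw [pow_succ, Matrix.SpecialLinearGroup.coe_mul, ← mulVec_mulVec, hγ, mulVec_smul, ih,
      smul_smul, pow_succ']

lemma eventually_eq_one_of_tendsto {Γ : Subgroup SL2R} [DiscreteTopology Γ] {g : ℕ → SL2R}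
    (hg : ∀ k, g k ∈ Γ) (hlim : Tendsto (fun k => (g k : M2)) atTop (𝓝 1)) :
    ∀ᶠ k in atTop, g k = 1 := by
  have hΓ : Tendsto (fun k => (⟨g k, hg k⟩ : Γ)) atTop (𝓝 1) := by
    refine tendsto_subtype_rng.2 ?_
    rw [nhds_induced]
    exact tendsto_comap_iff.2 hlim
  rw [nhds_discrete, tendsto_pure] at hΓ
  exact hΓ.mono fun k hk => congrArg Subtype.val hk

theorem not_discreteTopology_of_isParabolic_of_contracting {Γ : Subgroup SL2R} {P H : SL2R}
    {x t : ℝ} (hP : P ∈ Γ) (hpar : IsParabolic P) (hPx : FixesBoundary P x) (hH : H ∈ Γ)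
    (hHx : (H : M2) *ᵥ ![x, 1] = t • ![x, 1]) (ht : |t| < 1) : ¬ DiscreteTopology Γ := by
  intro hΓ
  obtain ⟨l, hl, hQ⟩ := exists_coe_sq_eq_one_add_of_isParabolic hpar hPx
  have ht0 : t ≠ 0 := by
    rintro rfl
    simpa using sq_sub_trace_mul_add_one_of_mulVec hHx
  have hconj (k : ℕ) : ((H ^ k * P ^ 2 * (H ^ k)⁻¹ : SL2R) : M2)
      = 1 + (l * (t ^ 2) ^ k) • cuspNilpotent x := by
    rw [coe_conj_one_add_cuspNilpotent (pow_mulVec_of_mulVec hHx k) hQ, ← pow_mul, ← pow_mul,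
      mul_comm k]
  have hlim : Tendsto (fun k => ((H ^ k * P ^ 2 * (H ^ k)⁻¹ : SL2R) : M2)) atTop (𝓝 1) := by
    have hpow : Tendsto (fun k : ℕ => l * (t ^ 2) ^ k) atTop (𝓝 0) := by
      simpa using (tendsto_pow_atTop_nhds_zero_of_abs_lt_one
        (by rw [abs_pow]; exact pow_lt_one₀ (abs_nonneg t) ht two_ne_zero)).const_mul l
    simp_rw [hconj]
    simpa using tendsto_const_nhds.add (hpow.smul_const (cuspNilpotent x))
  obtain ⟨k, hk⟩ := (eventually_eq_one_of_tendsto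
    (fun k => mul_mem (mul_mem (pow_mem hH k) (pow_mem hP 2)) (inv_mem (pow_mem hH k)))
    hlim).exists
  have hk0 : l * (t ^ 2) ^ k = 0 := by
    have h10 := congrFun (congrFun (hconj k) 1) 0
    rw [hk, Matrix.SpecialLinearGroup.coe_one, Matrix.add_apply, Matrix.smul_apply,
      cuspNilpotent_one_zero] at h10
    simpa using h10
  exact mul_ne_zero hl (by positivity) hk0

lemma coe_zpow_of_coe_eq_translation {g : SL2R} {e : ℝ} (hg : (g : M2) = !![1, e; 0, 1])
    (k : ℤ) : ((g ^ k : SL2R) : M2) = !![1, k * e; 0, 1] := by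
  have hinv : ((g⁻¹ : SL2R) : M2) = !![1, -e; 0, 1] := by
    simp [Matrix.SpecialLinearGroup.coe_inv, hg, adjugate_fin_two]
  induction k with
  | zero => simp [one_fin_two]
  | succ k ih =>
    rw [_root_.zpow_add_one, Matrix.SpecialLinearGroup.coe_mul, ih, hg, mul_fin_two]
    push_cast
    congrm !![?_, ?_; ?_, ?_] <;> ring
  | pred k ih =>
    rw [_root_.zpow_sub_one, Matrix.SpecialLinearGroup.coe_mul, ih, hinv, mul_fin_two]
    push_cast
    congrm !![?_, ?_; ?_, ?_] <;> ring

def weierstrassWord (n : ℕ) (hn : 0 < n) (k : ℤ) : SL2R :=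
  Wc n hn * Wa * Wc n hn * (Wa * Wb n hn * Wc n hn) ^ k * (Wc n hn * Wa * Wc n hn) *
    (Wa * Wb n hn * Wc n hn)

section Weierstrass

variable {n : ℕ} (hn : 0 < n)

lemma coe_Wc_mul_Wa_mul_Wc :
    ((Wc n hn * Wa * Wc n hn : SL2R) : M2) = !![1, -(n : ℝ); 2 / n, -1] := by
  have hsq : 1 / √n * (1 / √n) = 1 / (n : ℝ) := by
    rw [div_mul_div_comm, one_mul, Real.mul_self_sqrt n.cast_nonneg]
  change (1 / √n) • !![0, (n : ℝ); -1, 0] * !![1, 2; -1, -1] *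
    (1 / √n) • !![0, (n : ℝ); -1, 0] = _
  rw [smul_mul_assoc, smul_mul_assoc, mul_smul_comm, smul_smul, hsq, mul_fin_two, mul_fin_two]
  ext i j
  fin_cases i <;> fin_cases j <;> simp <;> field_simp

lemma coe_Wa_mul_Wb_mul_Wc :
    ((Wa * Wb n hn * Wc n hn : SL2R) : M2) = !![1, -((n : ℝ) + 2); 0, 1] := by
  change !![1, 2; -1, -1] * √n • !![1, 1; -((n : ℝ) + 1) / n, -1] *
    (1 / √n) • !![0, (n : ℝ); -1, 0] = _
  simp only [smul_mul_assoc, mul_smul_comm, smul_smul]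
  rw [one_div_mul_cancel (by positivity), one_smul, mul_fin_two, mul_fin_two]
  ext i j
  fin_cases i <;> fin_cases j <;> simp <;> field_simp <;> ring

lemma weierstrassWord_mem (k : ℤ) : weierstrassWord n hn k ∈ W n hn := by
  have ha : Wa ∈ W n hn := Subgroup.subset_closure (by simp)
  have hb : Wb n hn ∈ W n hn := Subgroup.subset_closure (by simp)
  have hc : Wc n hn ∈ W n hn := Subgroup.subset_closure (by simp)
  unfold weierstrassWord
  apply_rules [mul_mem, zpow_mem]

lemma coe_weierstrassWord (k : ℤ) :
    (weierstrassWord n hn k : M2) =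
      !![1, -(n : ℝ); 2 / n, -1] * !![1, k * -((n : ℝ) + 2); 0, 1] *
        !![1, -(n : ℝ); 2 / n, -1] * !![1, -((n : ℝ) + 2); 0, 1] := by
  rw [weierstrassWord, Matrix.SpecialLinearGroup.coe_mul, Matrix.SpecialLinearGroup.coe_mul,
    Matrix.SpecialLinearGroup.coe_mul, coe_zpow_of_coe_eq_translation (coe_Wa_mul_Wb_mul_Wc hn),
    coe_Wc_mul_Wa_mul_Wc, coe_Wa_mul_Wb_mul_Wc]

lemma weierstrassWord_mulVec_of_eq_eight_mul {m : ℕ} (hnm : n = 8 * m) :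
    (weierstrassWord n hn m : M2) *ᵥ ![12 * (m : ℝ), 1] =
      (1 / (4 * m) : ℝ) • ![12 * (m : ℝ), 1] := by
  subst hnm
  have hm : (m : ℝ) ≠ 0 := Nat.cast_ne_zero.2 (by omega)
  rw [coe_weierstrassWord]
  simp only [← mulVec_mulVec]
  ext i
  fin_cases i <;> simp [mulVec, dotProduct, Fin.sum_univ_two] <;> field_simp <;> ring

lemma weierstrassWord_mulVec_of_eq_four_mul_add_two {j : ℕ} (hj : 0 < j) (hnj : n = 4 * j + 2) :
    (weierstrassWord n hn (-(j ^ 2 : ℤ)) : M2) *ᵥ ![(2 * j + 1) * (3 * j + 1) / (j : ℝ), 1] =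
      (-1 / (2 * j + 1) ^ 2 : ℝ) • ![(2 * j + 1) * (3 * j + 1) / (j : ℝ), 1] := by
  subst hnj
  rw [coe_weierstrassWord]
  simp only [← mulVec_mulVec]
  ext i
  fin_cases i <;> simp [mulVec, dotProduct, Fin.sum_univ_two] <;> field_simp <;> ring

theorem exists_mem_W_mulVec_rat_of_mod_eight (h6 : 6 ≤ n)
    (h : n % 8 = 0 ∨ n % 8 = 2 ∨ n % 8 = 6) :
    ∃ H ∈ W n hn, ∃ (q : ℚ) (t : ℝ),
      (H : M2) *ᵥ ![(q : ℝ), 1] = t • ![(q : ℝ), 1] ∧ |t| < 1 := by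
  by_cases h8 : n % 8 = 0
  · obtain ⟨m, rfl⟩ : ∃ m, n = 8 * m := ⟨n / 8, by omega⟩
    have hm : (1 : ℝ) ≤ m := by exact_mod_cast (by omega : 1 ≤ m)
    refine ⟨_, weierstrassWord_mem _ m, 12 * m, 1 / (4 * m), ?_, ?_⟩
    · push_cast
      exact weierstrassWord_mulVec_of_eq_eight_mul _ rfl
    · rw [abs_of_pos (by positivity), div_lt_one (by positivity)]
      linarith
  · obtain ⟨j, rfl⟩ : ∃ j, n = 4 * j + 2 := ⟨n / 4, by omega⟩
    have hj : (1 : ℝ) ≤ j := by exact_mod_cast (by omega : 1 ≤ j)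
    refine ⟨_, weierstrassWord_mem _ (-(j ^ 2 : ℤ)), (2 * j + 1) * (3 * j + 1) / j,
      -1 / (2 * j + 1) ^ 2, ?_, ?_⟩
    · push_cast
      exact weierstrassWord_mulVec_of_eq_four_mul_add_two _ (by omega) rfl
    · rw [abs_div, abs_neg, abs_one, abs_of_pos (by positivity), div_lt_one (by positivity)]
      nlinarith

end Weierstrass

/-- For every `n ≥ 6` with `n ≡ 0, 2, 6 (mod 8)`, the Weierstrass group `W_n` is
not pseudomodular: it is not both discrete and with cusp set exactly `ℚ ∪ {∞}`. -/
theorem weierstrass_not_pseudomodular (n : ℕ) (hn : 6 ≤ n)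
    (h : n % 8 = 0 ∨ n % 8 = 2 ∨ n % 8 = 6) :
    ¬ (DiscreteTopology (W n (by omega)) ∧
        (∃ γ ∈ W n (by omega : 0 < n), IsParabolic γ ∧ FixesInfty γ) ∧
        (∀ q : ℚ, ∃ γ ∈ W n (by omega : 0 < n), IsParabolic γ ∧ FixesBoundary γ (q : ℝ)) ∧
        (∀ x : ℝ, (∃ γ ∈ W n (by omega : 0 < n), IsParabolic γ ∧ FixesBoundary γ x) →
          ∃ q : ℚ, x = (q : ℝ))) := by
  rintro ⟨hdisc, -, hcusp, -⟩
  obtain ⟨H, hH, q, t, hHq, ht⟩ := exists_mem_W_mulVec_rat_of_mod_eight (by omega) hn h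
  obtain ⟨P, hP, hpar, hPq⟩ := hcusp q
  exact not_discreteTopology_of_isParabolic_of_contracting hP hpar hPq hH hHq ht hdisc
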